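/- Let P and Q be groups, ι : P → Q a group homomorphism, and let (∂ : I → Q) together with (j, ι) be an induced crossed module of the identity crossed module on P along ι. Then the image of ∂ equals the normal closure of ι(P) in Q. -/
import Mathlib


universe u

/-- A crossed module `(μ : M → P)`: groups `M`, `P`, a (right) action of `P` on `M` by
group automorphisms, written `act m p` for `m ^ p`, and a homomorphism `μ : M →* P`
satisfying CM1: `μ (m ^ p) = p⁻¹ * μ m * p` and CM2: `n ^ (μ m) = m⁻¹ * n * m`. -/
structure CrossedModule (M P : Type u) [Group M] [Group P] where
  μ : M →* P
  act : M → P → M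
  act_mul : ∀ m n p, act (m * n) p = act m p * act n p
  act_one : ∀ m, act m 1 = m
  act_act : ∀ m p q, act (act m p) q = act m (p * q)
  cm1 : ∀ m p, μ (act m p) = p⁻¹ * μ m * p
  cm2 : ∀ m n, act n (μ m) = m⁻¹ * n * m

/-- A morphism of crossed modules `(f, g) : (μ : M → P) → (ν : N → Q)`:
group homomorphisms `f : M → N`, `g : P → Q` with `ν ∘ f = g ∘ μ` and
`f (m ^ p) = (f m) ^ (g p)`. -/
def CrossedModule.IsMorphism {M P N Q : Type u} [Group M] [Group P] [Group N] [Group Q]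
    (X : CrossedModule M P) (Y : CrossedModule N Q) (f : M →* N) (g : P →* Q) : Prop :=
  (∀ m, Y.μ (f m) = g (X.μ m)) ∧ ∀ m p, f (X.act m p) = Y.act (f m) (g p)

/-- `(∂ : I → Q)` together with `j : M → I` is an induced crossed module of `(μ : M → P)`
along `ι : P → Q`: `(j, ι)` is a morphism of crossed modules, and for every crossed module
`(ν : N → Q)` and morphism `(f, ι) : (μ : M → P) → (ν : N → Q)` there is a unique group
homomorphism `φ : I → N` with `ν ∘ φ = ∂`, `φ (x ^ q) = (φ x) ^ q`, and `φ ∘ j = f`. -/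
def IsInducedCrossedModule {M P Q I : Type u} [Group M] [Group P] [Group Q] [Group I]
    (X : CrossedModule M P) (ι : P →* Q) (Y : CrossedModule I Q) (j : M →* I) : Prop :=
  CrossedModule.IsMorphism X Y j ι ∧
  ∀ (N : Type u) [Group N] (Z : CrossedModule N Q) (f : M →* N),
    CrossedModule.IsMorphism X Z f ι →
    ∃! φ : I →* N, (∀ x, Z.μ (φ x) = Y.μ x) ∧
      (∀ x q, φ (Y.act x q) = Z.act (φ x) q) ∧ ∀ m, φ (j m) = f m

/-- The identity crossed module `(id_P : P → P)` with `P` acting on itself by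
conjugation, `m ^ p = p⁻¹ * m * p`. -/
def conjCM (P : Type u) [Group P] : CrossedModule P P where
  μ := MonoidHom.id P
  act m p := p⁻¹ * m * p
  act_mul m n p := by group
  act_one m := by group
  act_act m p q := by group
  cm1 m p := rfl
  cm2 m n := rfl

/-- If `(∂ : I → Q)`, `(j, ι)` is an induced crossed module of the identity crossed module
on `P` along `ι : P → Q`, then the image of `∂` equals the normal closure of `ι(P)` in `Q`. -/
theorem induced_range_eq_normalClosure {P Q : Type u} [Group P] [Group Q]
    (ι : P →* Q) {I : Type u} [Group I] (Y : CrossedModule I Q) (j : P →* I)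
    (hInd : IsInducedCrossedModule (conjCM P) ι Y j) :
    Y.μ.range = Subgroup.normalClosure (Set.range ι) := by
  obtain ⟨⟨hmor1, _⟩, huniv⟩ := hInd
  apply le_antisymm
  · -- range ≤ normalClosure
    set N := Subgroup.normalClosure (Set.range ι) with hN
    haveI : N.Normal := Subgroup.normalClosure_normal
    let Z : CrossedModule N Q :=
      { μ := N.subtype
        act := fun n q => ⟨q⁻¹ * (n : Q) * q, by
          simpa using (‹N.Normal›.conj_mem (n : Q) n.2 q⁻¹)⟩
        act_mul := fun m n p => Subtype.ext (by push_cast; group)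
        act_one := fun m => Subtype.ext (by push_cast; group)
        act_act := fun m p q => Subtype.ext (by push_cast; group)
        cm1 := fun m p => rfl
        cm2 := fun m n => rfl }
    let f : P →* N := ι.codRestrict N
      (fun p => Subgroup.subset_normalClosure ⟨p, rfl⟩)
    have hfm : CrossedModule.IsMorphism (conjCM P) Z f ι := by
      refine ⟨fun m => rfl, fun m p => Subtype.ext ?_⟩
      show ι (p⁻¹ * m * p) = (ι p)⁻¹ * ι m * ι p
      simp [mul_assoc]
    obtain ⟨φ, ⟨h1, _, _⟩, _⟩ := huniv N Z f hfm
    rintro _ ⟨y, rfl⟩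
    rw [← h1 y]
    exact (φ y).2
  · haveI : Y.μ.range.Normal := by
      constructor
      rintro _ ⟨x, rfl⟩ q
      exact ⟨Y.act x q⁻¹, by rw [Y.cm1]; group⟩
    apply Subgroup.normalClosure_le_normal
    rintro _ ⟨p, rfl⟩
    exact ⟨j p, hmor1 p⟩
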